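/- arXiv:1901.05504 — 2 statements merged into one kernel-verified Lean document; each statement's English description precedes it below -/
import Mathlib

section
/- Suppose F : (0,∞) → (0,∞) is differentiable with F' monotone decreasing, β, c > 0 are constants, and F'((βcs + 1)/(β²cx)) = F'((βcs + x)/(β²c)) holds for all x, s > 0. Then F' is constant on (0,∞), so F(t) = d·t + e for some constants d, e. -/
/-! Taking `s = 1`, the two arguments of `F'` in the functional equation tend to `0` and to `∞`
as `x → ∞`. An antitone function that agrees at the endpoints of an interval is constant on it,
so `F'` is constant on arbitrarily large intervals, hence on `(0, ∞)`; a function with constant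
derivative on an interval is affine there. -/

open Filter Set Topology

lemma AntitoneOn.eq_left_of_eq_of_le_of_le {α β : Type*} [Preorder α] [PartialOrder β]
    {f : α → β} {s : Set α} (hf : AntitoneOn f s) {a b t : α} (ha : a ∈ s) (hb : b ∈ s)
    (ht : t ∈ s) (hat : a ≤ t) (htb : t ≤ b) (hab : f a = f b) : f t = f a :=
  le_antisymm (hf ha ht hat) (hab ▸ hf ht hb htb)

theorem AntitoneOn.eq_of_tendsto_zero_of_tendsto_atTop {ι : Type*} {l : Filter ι} [l.NeBot]
    {f : ℝ → ℝ} (hf : AntitoneOn f (Ioi 0)) {a b : ι → ℝ} (ha : Tendsto a l (𝓝[>] 0))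
    (hb : Tendsto b l atTop) (hab : ∀ᶠ i in l, f (a i) = f (b i)) {t u : ℝ} (ht : 0 < t)
    (hu : 0 < u) : f t = f u := by
  obtain ⟨i, ⟨hai, hait⟩, hbi, hfi⟩ :=
    ((ha.eventually (Ioo_mem_nhdsGT (lt_min ht hu))).and
      ((hb.eventually_ge_atTop (max t u)).and hab)).exists
  have hbi_pos : 0 < b i := ht.trans_le ((le_max_left t u).trans hbi)
  rw [hf.eq_left_of_eq_of_le_of_le hai hbi_pos ht (hait.le.trans (min_le_left t u))
      ((le_max_left t u).trans hbi) hfi,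
    hf.eq_left_of_eq_of_le_of_le hai hbi_pos hu (hait.le.trans (min_le_right t u))
      ((le_max_right t u).trans hbi) hfi]

theorem exists_eq_mul_add_of_hasDerivAt {F : ℝ → ℝ} {s : Set ℝ} (hs : IsOpen s)
    (hs' : IsPreconnected s) {d : ℝ} (hF : ∀ t ∈ s, HasDerivAt F d t) :
    ∃ e : ℝ, ∀ t ∈ s, F t = d * t + e := by
  have hlin : ∀ t, HasDerivAt (fun t => d * t) d t := fun t => by
    simpa using (hasDerivAt_id t).const_mul d
  obtain ⟨e, he⟩ := hs.exists_eq_add_of_deriv_eq hs'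
    (fun t ht => (hF t ht).differentiableAt.differentiableWithinAt)
    (fun t _ => (hlin t).differentiableAt.differentiableWithinAt)
    (fun t ht => by simp only [(hF t ht).deriv, (hlin t).deriv])
  exact ⟨e, he⟩

theorem stmt_12 (F F' : ℝ → ℝ) (β c : ℝ) (hβ : 0 < β) (hc : 0 < c)
    (hderiv : ∀ t > 0, HasDerivAt F (F' t) t)
    (hanti : AntitoneOn F' (Set.Ioi 0))
    (heq : ∀ x > 0, ∀ s > 0,
      F' ((β * c * s + 1) / (β ^ 2 * c * x)) = F' ((β * c * s + x) / (β ^ 2 * c))) :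
    (∀ t > 0, ∀ s > 0, F' t = F' s) ∧
    ∃ d e : ℝ, ∀ t > 0, F t = d * t + e := by
  have hβc : 0 < β ^ 2 * c := by positivity
  have hlow : Tendsto (fun x => (β * c * 1 + 1) / (β ^ 2 * c * x)) atTop (𝓝[>] 0) :=
    tendsto_nhdsWithin_iff.2
      ⟨tendsto_const_nhds.div_atTop (tendsto_id.const_mul_atTop hβc),
        (eventually_gt_atTop 0).mono fun x hx => mem_Ioi.2 (by positivity)⟩
  have hhigh : Tendsto (fun x => (β * c * 1 + x) / (β ^ 2 * c)) atTop atTop :=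
    (tendsto_atTop_add_const_left _ _ tendsto_id).atTop_div_const hβc
  have hconst : ∀ t > 0, ∀ s > 0, F' t = F' s := fun t ht s hs =>
    hanti.eq_of_tendsto_zero_of_tendsto_atTop hlow hhigh
      ((eventually_gt_atTop 0).mono fun x hx => heq x hx 1 one_pos) ht hs
  refine ⟨hconst, F' 1, exists_eq_mul_add_of_hasDerivAt isOpen_Ioi isPreconnected_Ioi ?_⟩
  intro t ht
  rw [← hconst t ht 1 one_pos]
  exact hderiv t ht
end

section
/- Let f : (0,∞) → (0,∞) satisfy t·f(1/t) = f(t) for all t > 0 and suppose that s·F(t/h(s)) = t·F(s/h(t)) for all t, s > 0, where F(t) = 1/f(1/t) and h : (0,∞) → (0,∞). Then h(t)·f(s/h(t)) = t·f(h(s)/t) for all t, s > 0 implies s·f(h(t)/s) = t·f(h(s)/t) for all t, s > 0. -/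
lemma adjoint_eq_div_of_symm {f F : ℝ → ℝ}
    (hsym : ∀ t > 0, t * f (1 / t) = f t) (hF : ∀ t > 0, F t = 1 / f (1 / t)) :
    ∀ x > 0, F x = x / f x := by
  intro x hx
  rw [hF x hx, ← hsym x hx]
  field_simp

lemma mul_apply_div_symm_of_adjoint {f F h : ℝ → ℝ}
    (hfpos : ∀ t > 0, 0 < f t) (hhpos : ∀ t > 0, 0 < h t)
    (hFdiv : ∀ x > 0, F x = x / f x)
    (hFeq : ∀ t > 0, ∀ s > 0, s * F (t / h s) = t * F (s / h t)) :
    ∀ t > 0, ∀ s > 0, h s * f (t / h s) = h t * f (s / h t) := by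
  intro t ht s hs
  have hts : 0 < t / h s := div_pos ht (hhpos s hs)
  have hst : 0 < s / h t := div_pos hs (hhpos t ht)
  have e := hFeq t ht s hs
  rw [hFdiv _ hts, hFdiv _ hst] at e
  have := (hfpos _ hts).ne'
  have := (hfpos _ hst).ne'
  have := (hhpos s hs).ne'
  have := (hhpos t ht).ne'
  field_simp at e
  exact e.symm

theorem stmt_13 (f F h : ℝ → ℝ)
    (hfpos : ∀ t > 0, 0 < f t)
    (hhpos : ∀ t > 0, 0 < h t)
    (hsym : ∀ t > 0, t * f (1 / t) = f t)
    (hF : ∀ t > 0, F t = 1 / f (1 / t))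
    (hFeq : ∀ t > 0, ∀ s > 0, s * F (t / h s) = t * F (s / h t)) :
    (∀ t > 0, ∀ s > 0, h t * f (s / h t) = t * f (h s / t)) →
    (∀ t > 0, ∀ s > 0, s * f (h t / s) = t * f (h s / t)) := by
  intro H t ht s hs
  have hswap := mul_apply_div_symm_of_adjoint hfpos hhpos (adjoint_eq_div_of_symm hsym hF) hFeq
  rw [← H s hs t ht, ← H t ht s hs, hswap t ht s hs]
end
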